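/- arXiv:1311.7357 — 3 statements merged into one kernel-verified Lean document; each statement's English description precedes it below -/
import Mathlib

section
/- Let σ be the request sequence defined by a bitstring B of length m on a two-item list initially ordered [x,y] (full cost model). For every way S of serving σ there exists a way S′ of serving σ whose total cost is at most the total cost of S and such that after serving each of the m rounds the list is ordered [x,y]. -/
namespace ListUpdate

variable {α : Type} [DecidableEq α]

/-- Swap the adjacent items at (0-based) positions `i` and `i+1`. -/
def adjSwap (L : List α) (i : ℕ) : List α :=
  L.take i ++ (match L.drop i with
    | a :: b :: t => b :: a :: t
    | t => t)

/-- An offline action for one request: a sequence of paid exchanges performed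
before the access (each given by the position of the swapped pair), and the
target position for the free exchange performed after the access. -/
structure Action (α : Type) where
  paid : List ℕ
  target : ℕ

def doPaid (L : List α) (ps : List ℕ) : List α := ps.foldl adjSwap L

/-- Move item `r` (for free) to position `min j (current position)`,
i.e. to any position not farther from the front. -/
def freeMove (L : List α) (r : α) (j : ℕ) : List α :=
  (L.erase r).insertIdx (min j (L.idxOf r)) r

/-- Cost of one offline step: one unit per paid exchange plus the access cost;
`c = 1` gives the full cost model, `c = 0` the partial cost model. -/
def stepCost (c : ℕ) (L : List α) (r : α) (a : Action α) : ℕ :=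
  a.paid.length + ((doPaid L a.paid).idxOf r + c)

def stepList (L : List α) (r : α) (a : Action α) : List α :=
  freeMove (doPaid L a.paid) r a.target

/-- Total cost of serving the request sequence with the given actions. -/
def serveCost (c : ℕ) : List α → List α → List (Action α) → ℕ
  | _, [], _ => 0
  | _, _ :: _, [] => 0
  | L, r :: σ, a :: as => stepCost c L r a + serveCost c (stepList L r a) σ as

/-- The list configuration after serving the requests with the given actions. -/
def serveList : List α → List α → List (Action α) → List α
  | L, [], _ => L
  | L, _ :: _, [] => L
  | L, r :: σ, a :: as => serveList (stepList L r a) σ as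

/-- `optCost c L σ` : the optimal offline cost of serving `σ` starting from list `L`. -/
noncomputable def optCost (c : ℕ) (L : List α) (σ : List α) : ℕ :=
  sInf { n | ∃ as : List (Action α), as.length = σ.length ∧ serveCost c L σ as = n }

/-- Cost of an MTF2 (move-to-front-every-other-access) algorithm: it keeps one bit
per item; on each request the requested item's bit is flipped and the item is moved
to the front exactly when the bit becomes `false` (i.e. 0). -/
def mtf2Cost (c : ℕ) : (α → Bool) → List α → List α → ℕ
  | _, _, [] => 0
  | bits, L, r :: σ =>
    (L.idxOf r + c) +
      mtf2Cost c (Function.update bits r (!bits r))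
        (if !bits r then L else r :: L.erase r) σ

/-- Final list of an MTF2 algorithm. -/
def mtf2List : (α → Bool) → List α → List α → List α
  | _, L, [] => L
  | bits, L, r :: σ =>
      mtf2List (Function.update bits r (!bits r))
        (if !bits r then L else r :: L.erase r) σ

/-- MTFO moves the requested item to the front on every odd request to it:
this is MTF2 with all bits initially 1. -/
def mtfoCost (c : ℕ) (L σ : List α) : ℕ := mtf2Cost c (fun _ => true) L σ

/-- MTFE moves the requested item to the front on every even request to it:
this is MTF2 with all bits initially 0. -/
def mtfeCost (c : ℕ) (L σ : List α) : ℕ := mtf2Cost c (fun _ => false) L σ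

/-- One step of TS (Timestamp). `h` is the list of previous requests, most recent
first. The requested item `x` is inserted in front of the first item of the list
that precedes `x` and was requested at most once since the last request to `x`;
if there is no such item, or this is the first request to `x`, nothing moves. -/
def tsStep (h : List α) (L : List α) (x : α) : List α :=
  if x ∈ h then
    let cnt : α → ℕ := fun z => (h.takeWhile (fun w => decide (w ≠ x))).count z
    let pre := L.takeWhile (fun w => decide (w ≠ x))
    let keep := pre.takeWhile (fun z => decide (2 ≤ cnt z))
    keep ++ x :: (pre.drop keep.length ++ (L.dropWhile (fun w => decide (w ≠ x))).tail)
  else L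

/-- Cost of TS; `h` is the history of previous requests, most recent first
(initially `[]`). -/
def tsCost (c : ℕ) : List α → List α → List α → ℕ
  | _, _, [] => 0
  | h, L, r :: σ => (L.idxOf r + c) + tsCost c (r :: h) (tsStep h L r) σ

/-- An online algorithm with advice: its action may depend on the advice tape and
on the sequence of requests seen so far (ending with the current request). -/
def OnlineAdviceAlg (α : Type) := (ℕ → Bool) → List α → Action α

/-- Total cost of running the online algorithm `A` with advice tape `φ`:
`past` is the reversed-free list of requests served so far (oldest first). -/
def runAdvCost (c : ℕ) (A : OnlineAdviceAlg α) (φ : ℕ → Bool) :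
    List α → List α → List α → ℕ
  | _, _, [] => 0
  | past, L, r :: σ =>
      stepCost c L r (A φ (past ++ [r])) +
        runAdvCost c A φ (past ++ [r]) (stepList L r (A φ (past ++ [r]))) σ

/-- `A`, run on `σ` with tape `φ`, reads at most the first `k` bits of advice:
its behaviour on every step of `σ` is unchanged if the tape is modified
beyond position `k`. -/
def UsesAdvice (A : OnlineAdviceAlg α) (φ : ℕ → Bool) (σ : List α) (k : ℕ) : Prop :=
  ∀ ψ : ℕ → Bool, (∀ i < k, ψ i = φ i) →
    ∀ t, 0 < t → t ≤ σ.length → A ψ (σ.take t) = A φ (σ.take t)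

end ListUpdate

open ListUpdate

/-- The round of requests determined by one bit of the defining bitstring. -/
def roundSeq {α : Type} (x y : α) (b : Bool) : List α :=
  if b then [y, x, x, x, x] else [y, y, y, x, x]

/-- The request sequence defined by the bitstring `B` on the two-item list `[x, y]`. -/
def seqOf {α : Type} (x y : α) (B : List Bool) : List α :=
  (B.map (roundSeq x y)).flatten

/-!
With two items the list is always `[x, y]` or `[y, x]`, and serving one request costs at least
1 if its item is in front and stays there, 3 if it is in front and ends up behind (a paid
exchange and an access at position 2), and 2 if it is at the back. Give `[x, y]` potential 1
and `[y, x]` potential 0. A finite check over all configuration paths through a round shows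
that every round costs, amortised, at least 6 (bit 1) or 7 (bit 0). These are exactly the costs
of serving each round from `[x, y]` back to `[x, y]`: for a 1-round nothing is ever moved, for a
0-round `y` is moved to the front at once and `x` at its first request.
-/

theorem List.take_mul_flatten_map {β γ : Type*} {f : β → List γ} {n : ℕ}
    (hf : ∀ b, (f b).length = n) (l : List β) (i : ℕ) :
    (l.map f).flatten.take (n * i) = ((l.take i).map f).flatten := by
  induction l generalizing i with
  | nil => simp
  | cons b l ih =>
    cases i with
    | zero => simp
    | succ i => simp [Nat.mul_succ, Nat.add_comm (n * i), List.take_add, hf, ih]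

namespace ListUpdate

variable {α : Type}

theorem adjSwap_pair (a b : α) (i : ℕ) :
    adjSwap [a, b] i = [b, a] ∨ adjSwap [a, b] i = [a, b] := by
  rcases i with _ | _ | i <;> simp [adjSwap]

theorem doPaid_pair (a b : α) (ps : List ℕ) :
    doPaid [a, b] ps = [a, b] ∨ (doPaid [a, b] ps = [b, a] ∧ ps ≠ []) := by
  induction ps generalizing a b with
  | nil => exact .inl rfl
  | cons p ps ih =>
    change doPaid (adjSwap [a, b] p) ps = _ ∨ (doPaid (adjSwap [a, b] p) ps = _ ∧ _)
    rcases adjSwap_pair a b p with h | h <;> rw [h]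
    · rcases ih b a with h' | ⟨h', -⟩
      · exact .inr ⟨h', List.cons_ne_nil _ _⟩
      · exact .inl h'
    · rcases ih a b with h' | ⟨h', -⟩
      · exact .inl h'
      · exact .inr ⟨h', List.cons_ne_nil _ _⟩

def pairOf (x y : α) (s : Bool) : List α := if s then [y, x] else [x, y]

def reqOf (x y : α) (rb : Bool) : α := if rb then y else x

def stepWeight (rb s t : Bool) : ℕ := if rb = s then (if t = s then 1 else 3) else 2

def potential (s : Bool) : ℕ := if s then 0 else 1

def pathBound : Bool → List Bool → ℕ
  | s, [] => potential s
  | s, rb :: rbs =>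
    min (stepWeight rb s false + pathBound false rbs) (stepWeight rb s true + pathBound true rbs)

def roundBits (b : Bool) : List Bool :=
  if b then [true, false, false, false, false] else [true, true, true, false, false]

def roundCost (b : Bool) : ℕ := if b then 6 else 7

theorem roundCost_add_potential_le (b s : Bool) :
    roundCost b + potential s ≤ pathBound s (roundBits b) := by
  decide +revert

theorem roundSeq_eq_map (x y : α) (b : Bool) :
    roundSeq x y b = (roundBits b).map (reqOf x y) := by
  cases b <;> rfl

theorem length_roundSeq (x y : α) (b : Bool) : (roundSeq x y b).length = 5 := by
  cases b <;> rfl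

def roundActions (b : Bool) : List (Action α) :=
  if b then ⟨[], 1⟩ :: List.replicate 4 ⟨[], 0⟩ else List.replicate 5 ⟨[], 0⟩

def roundwiseActions (B : List Bool) : List (Action α) := (B.map roundActions).flatten

theorem length_roundActions (b : Bool) : (roundActions b : List (Action α)).length = 5 := by
  cases b <;> rfl

theorem length_roundwiseActions (x y : α) (B : List Bool) :
    (roundwiseActions B : List (Action α)).length = (seqOf x y B).length := by
  simp [roundwiseActions, seqOf, Function.comp_def, length_roundActions, length_roundSeq]

variable [DecidableEq α]

theorem serveCost_append (c : ℕ) (L σ₁ σ₂ : List α) (as₁ as₂ : List (Action α))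
    (h : as₁.length = σ₁.length) :
    serveCost c L (σ₁ ++ σ₂) (as₁ ++ as₂) =
      serveCost c L σ₁ as₁ + serveCost c (serveList L σ₁ as₁) σ₂ as₂ := by
  induction σ₁ generalizing L as₁ with
  | nil => simp_all [serveCost, serveList]
  | cons r σ₁ ih =>
    obtain _ | ⟨a, as₁⟩ := as₁
    · simp at h
    · simp only [List.cons_append, serveCost, serveList, ih _ as₁ (by simpa using h)]
      omega

theorem serveList_append (L σ₁ σ₂ : List α) (as₁ as₂ : List (Action α))
    (h : as₁.length = σ₁.length) :
    serveList L (σ₁ ++ σ₂) (as₁ ++ as₂) = serveList (serveList L σ₁ as₁) σ₂ as₂ := by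
  induction σ₁ generalizing L as₁ with
  | nil => simp_all [serveList]
  | cons r σ₁ ih =>
    obtain _ | ⟨a, as₁⟩ := as₁
    · simp at h
    · exact ih _ as₁ (by simpa using h)

theorem freeMove_pair_fst (a b : α) (j : ℕ) : freeMove [a, b] a j = [a, b] := by
  simp [freeMove]

theorem freeMove_pair_snd {a b : α} (hab : a ≠ b) (j : ℕ) :
    freeMove [a, b] b j = [b, a] ∨ freeMove [a, b] b j = [a, b] := by
  rcases j with _ | j <;> simp [freeMove, hab, List.insertIdx]

theorem exists_stepList_pair_eq {a b : α} (hab : a ≠ b) (rb : Bool) (act : Action α) :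
    ∃ t, stepList [a, b] (reqOf a b rb) act = pairOf a b t ∧
      stepWeight rb false t ≤ stepCost 1 [a, b] (reqOf a b rb) act := by
  unfold stepList stepCost
  rcases doPaid_pair a b act.paid with h | ⟨h, hne⟩ <;> rw [h]
  · cases rb
    · exact ⟨false, by simp [reqOf, pairOf, freeMove_pair_fst, stepWeight]⟩
    · rcases freeMove_pair_snd hab act.target with h' | h'
      · exact ⟨true, by simp [reqOf, pairOf, h', stepWeight, hab]⟩
      · exact ⟨false, by simp [reqOf, pairOf, h', stepWeight, hab]⟩
  · have hpaid := List.length_pos_iff.mpr hne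
    cases rb
    · rcases freeMove_pair_snd hab.symm act.target with h' | h'
      · exact ⟨false, by simp [reqOf, pairOf, h', stepWeight, hab.symm]⟩
      · exact ⟨true, by simp [reqOf, pairOf, h', stepWeight, hab.symm]; omega⟩
    · exact ⟨true, by simp [reqOf, pairOf, freeMove_pair_fst, stepWeight]; omega⟩

theorem exists_stepList_pairOf_eq {x y : α} (hxy : x ≠ y) (s rb : Bool) (act : Action α) :
    ∃ t, stepList (pairOf x y s) (reqOf x y rb) act = pairOf x y t ∧
      stepWeight rb s t ≤ stepCost 1 (pairOf x y s) (reqOf x y rb) act := by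
  cases s
  · exact exists_stepList_pair_eq hxy rb act
  · obtain ⟨t, h, hw⟩ := exists_stepList_pair_eq hxy.symm (!rb) act
    refine ⟨!t, ?_, ?_⟩ <;> cases rb <;> cases t
    all_goals first
      | simpa [pairOf, reqOf] using h
      | simpa [pairOf, reqOf, stepWeight] using hw

theorem pathBound_le_serveCost {x y : α} (hxy : x ≠ y) (rbs : List Bool) (s : Bool)
    (as : List (Action α)) (h : as.length = rbs.length) :
    ∃ t, serveList (pairOf x y s) (rbs.map (reqOf x y)) as = pairOf x y t ∧
      pathBound s rbs ≤ serveCost 1 (pairOf x y s) (rbs.map (reqOf x y)) as + potential t := by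
  induction rbs generalizing s as with
  | nil => exact ⟨s, by simp_all [serveList, serveCost, pathBound]⟩
  | cons rb rbs ih =>
    obtain _ | ⟨a, as⟩ := as
    · simp at h
    obtain ⟨u, hu, hwu⟩ := exists_stepList_pairOf_eq hxy s rb a
    obtain ⟨t, ht, hbt⟩ := ih u as (by simpa using h)
    refine ⟨t, by simpa [serveList, hu] using ht, ?_⟩
    have hmin : pathBound s (rb :: rbs) ≤ stepWeight rb s u + pathBound u rbs := by
      cases u
      exacts [min_le_left _ _, min_le_right _ _]
    simp only [List.map_cons, serveCost, hu]
    omega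

theorem sum_roundCost_le_serveCost {x y : α} (hxy : x ≠ y) (B : List Bool) (s : Bool)
    (as : List (Action α)) (h : as.length = (seqOf x y B).length) :
    (B.map roundCost).sum + potential s ≤ serveCost 1 (pairOf x y s) (seqOf x y B) as + 1 := by
  induction B generalizing s as with
  | nil => cases s <;> simp [potential]
  | cons b B ih =>
    have hseq : seqOf x y (b :: B) = roundSeq x y b ++ seqOf x y B := rfl
    rw [hseq, List.length_append, length_roundSeq] at h
    have hlen : (as.take 5).length = (roundSeq x y b).length := by
      simp [length_roundSeq]; omega
    obtain ⟨t, ht, hround⟩ := pathBound_le_serveCost hxy (roundBits b) s (as.take 5)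
      (by simpa [roundSeq_eq_map] using hlen)
    rw [← roundSeq_eq_map] at ht hround
    have hrest := ih t (as.drop 5) (by simp; omega)
    have hb := roundCost_add_potential_le b s
    rw [hseq, ← List.take_append_drop 5 as, serveCost_append _ _ _ _ _ _ hlen, ht]
    simp only [List.map_cons, List.sum_cons]
    omega

theorem serve_roundActions {x y : α} (hxy : x ≠ y) (b : Bool) :
    serveCost 1 [x, y] (roundSeq x y b) (roundActions b) = roundCost b ∧
      serveList [x, y] (roundSeq x y b) (roundActions b) = [x, y] := by
  cases b <;> simp [roundSeq, roundActions, roundCost, serveCost, serveList, stepCost, stepList,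
    doPaid, freeMove, hxy, hxy.symm, List.insertIdx]

theorem serve_roundwiseActions {x y : α} (hxy : x ≠ y) (B : List Bool) :
    serveCost 1 [x, y] (seqOf x y B) (roundwiseActions B) = (B.map roundCost).sum ∧
      serveList [x, y] (seqOf x y B) (roundwiseActions B) = [x, y] := by
  induction B with
  | nil => exact ⟨rfl, rfl⟩
  | cons b B ih =>
    have hlen : (roundActions b : List (Action α)).length = (roundSeq x y b).length := by
      rw [length_roundActions, length_roundSeq]
    have hseq : seqOf x y (b :: B) = roundSeq x y b ++ seqOf x y B := rfl
    have hacts : (roundwiseActions (b :: B) : List (Action α)) =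
        roundActions b ++ roundwiseActions B := rfl
    obtain ⟨hcost, hlist⟩ := serve_roundActions hxy b
    rw [hseq, hacts, serveCost_append _ _ _ _ _ _ hlen, serveList_append _ _ _ _ _ hlen,
      hlist, hcost, ih.1, ih.2]
    simp

end ListUpdate

/-- For every way `as` of serving the sequence defined by a bitstring `B` on a two-item
list initially ordered `[x, y]` (full cost model), there is a way `as'` of serving it
with no larger total cost such that after each of the `m` rounds the list is
ordered `[x, y]`. -/
theorem end_rounds_with_xy {α : Type} [DecidableEq α] (x y : α) (hxy : x ≠ y)
    (B : List Bool) (as : List (Action α)) (has : as.length = (seqOf x y B).length) :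
    ∃ as' : List (Action α), as'.length = (seqOf x y B).length ∧
      serveCost 1 [x, y] (seqOf x y B) as' ≤ serveCost 1 [x, y] (seqOf x y B) as ∧
      ∀ i ≤ B.length,
        serveList [x, y] ((seqOf x y B).take (5 * i)) (as'.take (5 * i)) = [x, y] := by
  refine ⟨roundwiseActions B, length_roundwiseActions x y B, ?_, fun i _ => ?_⟩
  · have hlower := sum_roundCost_le_serveCost hxy B false as has
    rw [(serve_roundwiseActions hxy B).1]
    simpa [potential, pairOf] using hlower
  · rw [seqOf, roundwiseActions, List.take_mul_flatten_map (length_roundSeq x y),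
      List.take_mul_flatten_map length_roundActions]
    exact (serve_roundwiseActions hxy (B.take i)).2
end

section
/- On a list of two items, under the partial cost model, every request sequence σ satisfies MTFO(σ) + MTFE(σ) + TS(σ) ≤ 5·OPT(σ). -/
open ListUpdate

/-!
On two items the offline algorithm pays nothing for a request only if the requested item is
already in its front position and it leaves the list alone; every other step costs it at least 1
and may end in either order. The three online algorithms run in lockstep on a finite
configuration: their front items, the MTF bits and the last two requests. The potential is the
number of further requests to OPT's front item that the three algorithms together would still pay
for before all of them have that item in front (plus one in a single corner case). A request that
is free for OPT is paid for exactly by the drop of this potential, and a request on which OPT pays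
raises online cost plus potential by at most 5. Both facts are checked exhaustively on the
configurations satisfying a small invariant.
-/

namespace ListUpdate

theorem exists_serveCost_eq_optCost {α : Type} [DecidableEq α] (c : ℕ) (L σ : List α) :
    ∃ as : List (Action α), as.length = σ.length ∧ serveCost c L σ as = optCost c L σ :=
  Nat.sInf_mem (s := {n | ∃ as : List (Action α), as.length = σ.length ∧ serveCost c L σ as = n})
    ⟨_, List.replicate σ.length ⟨[], 0⟩, List.length_replicate, rfl⟩

section Pair

variable {α : Type} {x y : α}

def item (x y : α) (b : Bool) : α := cond b y x

def pair (x y : α) (b : Bool) : List α := [item x y b, item x y !b]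

theorem item_injective (hxy : x ≠ y) : Function.Injective (item x y) := by
  intro a b h
  cases a <;> cases b <;> simp_all [item, eq_comm]

theorem adjSwap_pair_s5 (z : Bool) (i : ℕ) :
    adjSwap (pair x y z) i = pair x y (if i = 0 then !z else z) := by
  rcases i with _ | _ | i <;> simp [adjSwap, pair]

theorem exists_doPaid_pair (ps : List ℕ) (z : Bool) : ∃ w, doPaid (pair x y z) ps = pair x y w := by
  induction ps generalizing z with
  | nil => exact ⟨z, rfl⟩
  | cons i ps ih =>
    show ∃ w, doPaid (adjSwap (pair x y z) i) ps = pair x y w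
    rw [adjSwap_pair_s5]
    exact ih _

variable [DecidableEq α]

theorem idxOf_pair (hxy : x ≠ y) (f b : Bool) :
    (pair x y f).idxOf (item x y b) = (f != b).toNat := by
  cases f <;> cases b <;> simp [pair, item, hxy, hxy.symm]

theorem erase_pair (hxy : x ≠ y) (f b : Bool) : (pair x y f).erase (item x y b) = [item x y !b] := by
  cases f <;> cases b <;> simp [pair, item, hxy, hxy.symm]

theorem mtf2Cost_pair_cons (hxy : x ≠ y) (bits : α → Bool) (f b : Bool) (σ : List α) :
    mtf2Cost 0 bits (pair x y f) (item x y b :: σ) = (f != b).toNat +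
      mtf2Cost 0 (Function.update bits (item x y b) (!bits (item x y b)))
        (pair x y (if bits (item x y b) then b else f)) σ := by
  rw [mtf2Cost, idxOf_pair hxy, Nat.add_zero]
  cases hb : bits (item x y b)
  · rfl
  · rw [erase_pair hxy]
    rfl

theorem tsStep_back {a c : α} (hac : a ≠ c) (h : List α) (hh : ∀ r ∈ h, r = a ∨ r = c) :
    tsStep h [c, a] a = if a ∈ h.take 2 then [a, c] else [c, a] := by
  have hca : c ≠ a := hac.symm
  unfold tsStep
  rcases h with _ | ⟨r, _ | ⟨r', t⟩⟩
  · simp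
  · rcases hh r (by simp) with rfl | rfl <;> simp [hca]
  · rcases hh r (by simp) with rfl | rfl <;> rcases hh r' (by simp) with rfl | rfl <;>
      simp [hac, hca]

theorem tsStep_front (h : List α) (a c : α) : tsStep h [a, c] a = [a, c] := by
  simp [tsStep]

theorem tsStep_pair (hxy : x ≠ y) (h : List α) (hh : ∀ r ∈ h, r = x ∨ r = y) (f b : Bool) :
    tsStep h (pair x y f) (item x y b) = pair x y (if item x y b ∈ h.take 2 then b else f) := by
  have hne : item x y b ≠ item x y !b := (item_injective hxy).ne (by cases b <;> decide)
  rcases Bool.eq_or_eq_not f b with rfl | rfl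
  · simp [pair, tsStep_front]
  · have hh' : ∀ r ∈ h, r = item x y b ∨ r = item x y !b := by
      intro r hr
      cases b <;> simpa [item, or_comm] using hh r hr
    rw [show pair x y (!b) = [item x y !b, item x y b] by simp [pair], tsStep_back hne h hh']
    split_ifs <;> simp [pair]

theorem tsCost_pair_cons (hxy : x ≠ y) (h : List α) (hh : ∀ r ∈ h, r = x ∨ r = y)
    (f b : Bool) (σ : List α) :
    tsCost 0 h (pair x y f) (item x y b :: σ) = (f != b).toNat +
      tsCost 0 (item x y b :: h) (pair x y (if item x y b ∈ h.take 2 then b else f)) σ := by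
  simp only [tsCost, idxOf_pair hxy, tsStep_pair hxy h hh, Nat.add_zero]

theorem freeMove_pair (hxy : x ≠ y) (w b : Bool) (t : ℕ) :
    freeMove (pair x y w) (item x y b) t = pair x y (if t = 0 then b else w) := by
  rw [freeMove, idxOf_pair hxy, erase_pair hxy]
  cases w <;> cases b <;> rcases t with _ | t <;> simp [pair]

theorem exists_stepList_pair (hxy : x ≠ y) (z b : Bool) (a : Action α) :
    ∃ z', stepList (pair x y z) (item x y b) a = pair x y z' ∧
      (z' = z ∧ z = b ∨ 1 ≤ stepCost 0 (pair x y z) (item x y b) a) := by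
  rcases a with ⟨_ | ⟨i, ps⟩, t⟩
  · refine ⟨if t = 0 then b else z, freeMove_pair hxy z b t, ?_⟩
    by_cases hzb : z = b
    · simp [hzb]
    · right
      cases z <;> cases b <;> simp_all [stepCost, doPaid, idxOf_pair hxy]
  · obtain ⟨w, hw⟩ := exists_doPaid_pair (i :: ps) z
    exact ⟨_, by rw [stepList, hw, freeMove_pair hxy], Or.inr (by simp [stepCost]; omega)⟩

end Pair

/-- A joint configuration of MTFO, MTFE and TS on a two-item list, items coded by `Bool`.
`bit a` is MTFO's bit for item `a`; MTFE's bit is always its negation, since both flip the bit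
of every requested item and start from complementary values. -/
structure TwoItemConfig where
  mtfo : Bool
  mtfe : Bool
  ts : Bool
  bit : Bool → Bool
  last : Option Bool
  prev : Option Bool

namespace TwoItemConfig

def initial : TwoItemConfig := ⟨false, false, false, fun _ => true, none, none⟩

/-- On two items TS moves a requested item at the back to the front exactly when that item is
one of the last two requests. -/
def tsReady (s : TwoItemConfig) (b : Bool) : Bool := s.last == some b || s.prev == some b

def step (s : TwoItemConfig) (b : Bool) : TwoItemConfig where
  mtfo := if s.bit b then b else s.mtfo
  mtfe := if s.bit b then s.mtfe else b
  ts := if s.tsReady b then b else s.ts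
  bit := Function.update s.bit b (!s.bit b)
  last := some b
  prev := s.last

def onlineCost (s : TwoItemConfig) (b : Bool) : ℕ :=
  (s.mtfo != b).toNat + (s.mtfe != b).toNat + (s.ts != b).toNat

/-- The number of further requests to `target` that an algorithm with front item `front` pays
for before `target` is at its front, if the next such request moves `target` iff `movesNext`. -/
def lag (front target movesNext : Bool) : ℕ :=
  if front = target then 0 else if movesNext then 1 else 2

def catchUp (s : TwoItemConfig) (z : Bool) : ℕ :=
  lag s.mtfo z (s.bit z) + lag s.mtfe z (!s.bit z) + lag s.ts z (s.tsReady z)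

/-- The potential against an offline algorithm with front item `z`. The correction covers the
configuration in which one request to the other item would put it in front of all three
algorithms at once. -/
def potential (s : TwoItemConfig) (z : Bool) : ℕ :=
  if s.catchUp z = 1 ∧ s.last = some (!z) then 2 else s.catchUp z

/-- The front item of the MTF variant that moved `a` to the front at its latest request. -/
def lastMoverFront (s : TwoItemConfig) (a : Bool) : Bool := if s.bit a then s.mtfe else s.mtfo

/-- Holds on every reachable configuration; the amortized bounds below fail on some others. -/
def Invariant (s : TwoItemConfig) : Prop :=
  (s.last = none → s.prev = none) ∧
    ∀ a, s.last = some a → s.lastMoverFront a = a ∧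
      ∀ b, s.prev = some b → b ≠ a → s.bit a ≠ s.bit b → s.lastMoverFront b = b

instance : DecidablePred Invariant := fun _ => inferInstanceAs (Decidable (_ ∧ _))

theorem invariant_initial : initial.Invariant := by decide

theorem Invariant.step {s : TwoItemConfig} (hs : s.Invariant) (b : Bool) : (s.step b).Invariant := by
  obtain ⟨mo, me, t, bit, last, prev⟩ := s
  revert mo me t bit last prev b
  decide

theorem potential_initial : initial.potential false = 0 := by decide

theorem Invariant.amortized_free {s : TwoItemConfig} (hs : s.Invariant) (z : Bool) :
    s.onlineCost z + (s.step z).potential z ≤ s.potential z := by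
  obtain ⟨mo, me, t, bit, last, prev⟩ := s
  revert mo me t bit last prev z
  decide

theorem Invariant.amortized_paid {s : TwoItemConfig} (hs : s.Invariant) (b z z' : Bool) :
    s.onlineCost b + (s.step b).potential z' ≤ 5 + s.potential z := by
  obtain ⟨mo, me, t, bit, last, prev⟩ := s
  revert mo me t bit last prev b z z'
  decide

theorem Invariant.amortized {s : TwoItemConfig} (hs : s.Invariant) {b z z' : Bool} {k : ℕ}
    (hk : z' = z ∧ z = b ∨ 1 ≤ k) :
    s.onlineCost b + (s.step b).potential z' ≤ 5 * k + s.potential z := by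
  rcases hk with ⟨rfl, rfl⟩ | hk
  · exact (hs.amortized_free z').trans (Nat.le_add_left _ _)
  · have := hs.amortized_paid b z z'
    omega

variable {α : Type} {x y : α}

/-- `s` describes the MTF bits `bits` and the TS history `h` (most recent first) of a run on
requests to `x` and `y`. -/
structure Encodes (s : TwoItemConfig) (x y : α) (bits : α → Bool) (h : List α) : Prop where
  bit_eq : bits ∘ item x y = s.bit
  head_eq : h.head? = s.last.map (item x y)
  second_eq : h.tail.head? = s.prev.map (item x y)
  mem : ∀ r ∈ h, r = x ∨ r = y

theorem encodes_initial : initial.Encodes x y (fun _ => true) [] :=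
  ⟨rfl, rfl, rfl, by simp⟩

theorem Encodes.mem_take_two_iff {s : TwoItemConfig} {bits : α → Bool} {h : List α}
    (he : s.Encodes x y bits h) (hxy : x ≠ y) (b : Bool) :
    item x y b ∈ h.take 2 ↔ s.tsReady b = true := by
  have htake : h.take 2 = h.head?.toList ++ h.tail.head?.toList := by
    rcases h with _ | ⟨r, _ | ⟨r', t⟩⟩ <;> rfl
  rw [htake, he.head_eq, he.second_eq]
  simp [tsReady, (item_injective hxy).eq_iff]

variable [DecidableEq α]

theorem Encodes.step {s : TwoItemConfig} {bits : α → Bool} {h : List α}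
    (he : s.Encodes x y bits h) (hxy : x ≠ y) (b : Bool) :
    (s.step b).Encodes x y (Function.update bits (item x y b) (!bits (item x y b)))
      (item x y b :: h) where
  bit_eq := by
    have hb : bits (item x y b) = s.bit b := congrFun he.bit_eq b
    rw [Function.update_comp_eq_of_injective _ (item_injective hxy), he.bit_eq, hb]
    rfl
  head_eq := rfl
  second_eq := he.head_eq
  mem := by
    rintro r (_ | ⟨_, hr⟩)
    · cases b <;> simp [item]
    · exact he.mem r hr

end TwoItemConfig

open TwoItemConfig

variable {α : Type} [DecidableEq α] {x y : α}

def combinedCost (x y : α) (s : TwoItemConfig) (bits : α → Bool) (h σ : List α) : ℕ :=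
  mtf2Cost 0 bits (pair x y s.mtfo) σ + mtf2Cost 0 (not ∘ bits) (pair x y s.mtfe) σ +
    tsCost 0 h (pair x y s.ts) σ

theorem TwoItemConfig.Encodes.combinedCost_cons {s : TwoItemConfig} {bits : α → Bool}
    {h : List α} (he : s.Encodes x y bits h) (hxy : x ≠ y) (b : Bool) (σ : List α) :
    combinedCost x y s bits h (item x y b :: σ) = s.onlineCost b +
      combinedCost x y (s.step b) (Function.update bits (item x y b) (!bits (item x y b)))
        (item x y b :: h) σ := by
  have hb : bits (item x y b) = s.bit b := congrFun he.bit_eq b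
  simp only [combinedCost, mtf2Cost_pair_cons hxy, tsCost_pair_cons hxy h he.mem,
    he.mem_take_two_iff hxy, Function.comp_update, Function.comp_apply, hb, Bool.not_not,
    TwoItemConfig.step, onlineCost]
  cases s.bit b <;> simp only [Bool.not_false, Bool.not_true, Bool.false_eq_true, if_true,
    if_false] <;> ring

theorem combinedCost_le (hxy : x ≠ y) (σ : List α) (hσ : ∀ r ∈ σ, r = x ∨ r = y)
    (s : TwoItemConfig) (hs : s.Invariant) (bits : α → Bool) (h : List α) (he : s.Encodes x y bits h)
    (z : Bool) (as : List (Action α)) (hlen : as.length = σ.length) :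
    combinedCost x y s bits h σ ≤ 5 * serveCost 0 (pair x y z) σ as + s.potential z := by
  induction σ generalizing s bits h z as with
  | nil => simp [combinedCost, mtf2Cost, tsCost]
  | cons r σ ih =>
    obtain ⟨b, rfl⟩ : ∃ b, item x y b = r := by
      rcases hσ r List.mem_cons_self with rfl | rfl
      exacts [⟨false, rfl⟩, ⟨true, rfl⟩]
    obtain ⟨a, as, rfl⟩ : ∃ a as', as = a :: as' := List.exists_cons_of_length_eq_add_one hlen
    obtain ⟨z', hstep, hcost⟩ := exists_stepList_pair hxy z b a
    have hσ' : ∀ r ∈ σ, r = x ∨ r = y := fun r hr => hσ r (List.mem_cons_of_mem _ hr)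
    calc combinedCost x y s bits h (item x y b :: σ)
        = s.onlineCost b + combinedCost x y (s.step b)
            (Function.update bits (item x y b) (!bits (item x y b))) (item x y b :: h) σ :=
          he.combinedCost_cons hxy b σ
      _ ≤ s.onlineCost b + (5 * serveCost 0 (pair x y z') σ as + (s.step b).potential z') := by
          gcongr
          exact ih hσ' _ (hs.step b) _ _ (he.step hxy b) z' as (by simpa using hlen)
      _ ≤ 5 * stepCost 0 (pair x y z) (item x y b) a + 5 * serveCost 0 (pair x y z') σ as +
            s.potential z := by
          have := hs.amortized hcost
          omega
      _ = 5 * serveCost 0 (pair x y z) (item x y b :: σ) (a :: as) + s.potential z := by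
          rw [serveCost, hstep]
          ring

end ListUpdate

open ListUpdate

/-- On a list of two items, under the partial cost model,
`MTFO(σ) + MTFE(σ) + TS(σ) ≤ 5·OPT(σ)` for every request sequence `σ`. -/
theorem sum_of_three_le_five_opt {α : Type} [DecidableEq α] (x y : α) (hxy : x ≠ y)
    (σ : List α) (hσ : ∀ r ∈ σ, r = x ∨ r = y) :
    mtfoCost 0 [x, y] σ + mtfeCost 0 [x, y] σ + tsCost 0 [] [x, y] σ ≤
      5 * optCost 0 [x, y] σ := by
  obtain ⟨as, hlen, hopt⟩ := exists_serveCost_eq_optCost 0 [x, y] σ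
  have key := combinedCost_le hxy σ hσ _ TwoItemConfig.invariant_initial (fun _ => true) []
    TwoItemConfig.encodes_initial false as hlen
  rw [TwoItemConfig.potential_initial, Nat.add_zero] at key
  rw [← hopt]
  exact key
end

section
/- For every ε > 0 and every M, there exist a list with an initial order and a request sequence σ such that, under the full cost model, OPT(σ) ≥ M and min(MTFO(σ), MTFE(σ), TS(σ)) ≥ (1.6 − ε)·OPT(σ). Consequently, the algorithm that serves each input by the cheapest of MTFO, MTFE and TS has competitive ratio at least 1.6 under the full cost model. -/
/-! The witness uses the items `0, …, 24`, initially in increasing order, and repeats the block of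
200 requests consisting of three ascending passes, an ascending pass with every request doubled,
a descending pass and a descending pass with every request doubled. Offline one serves the block
with free exchanges only, moving to the front during the two doubled passes: this costs
`3·325 + 350 + 325 + 350 = 2000` and restores the initial list. MTFO, MTFE and TS each pay `3200`
on the block and also come back to their initial state: every item is requested an even number
of times, so the MTF2 bits are restored, and a TS step only looks at the history back to the
previous request of the same item, which lies within the last block. Hence on `n` blocks all
three pay `1.6` times the cost `2000 n` of the offline schedule, while `OPT ≥ 200 n`. -/

namespace ListUpdate

variable {α : Type} [DecidableEq α]

section Offline

lemma serveCost_append_of_length_eq (c : ℕ) {σ₁ : List α} {as₁ : List (Action α)}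
    (h : as₁.length = σ₁.length) (σ₂ : List α) (as₂ : List (Action α)) (L : List α) :
    serveCost c L (σ₁ ++ σ₂) (as₁ ++ as₂)
      = serveCost c L σ₁ as₁ + serveCost c (serveList L σ₁ as₁) σ₂ as₂ := by
  induction σ₁ generalizing as₁ L with
  | nil => simp [List.length_eq_zero_iff.mp h, serveCost, serveList]
  | cons r σ ih =>
    obtain _ | ⟨a, as⟩ := as₁
    · simp at h
    · simp only [List.cons_append, serveCost, serveList]
      rw [ih (by simpa using h), Nat.add_assoc]

lemma serveList_append_of_length_eq {σ₁ : List α} {as₁ : List (Action α)}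
    (h : as₁.length = σ₁.length) (σ₂ : List α) (as₂ : List (Action α)) (L : List α) :
    serveList L (σ₁ ++ σ₂) (as₁ ++ as₂) = serveList (serveList L σ₁ as₁) σ₂ as₂ := by
  induction σ₁ generalizing as₁ L with
  | nil => simp [List.length_eq_zero_iff.mp h, serveList]
  | cons r σ ih =>
    obtain _ | ⟨a, as⟩ := as₁
    · simp at h
    · simp only [List.cons_append, serveList]
      exact ih (by simpa using h) _

lemma serveCost_flatten_replicate (c : ℕ) {B L : List α} {as : List (Action α)}
    (h : as.length = B.length) (hL : serveList L B as = L) (n : ℕ) :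
    serveCost c L (List.replicate n B).flatten (List.replicate n as).flatten
      = n * serveCost c L B as := by
  induction n with
  | zero => simp [serveCost]
  | succ n ih =>
    simp only [List.replicate_succ, List.flatten_cons]
    rw [serveCost_append_of_length_eq c h, hL, ih]
    ring

lemma mul_length_le_serveCost (c : ℕ) {σ : List α} {as : List (Action α)}
    (h : as.length = σ.length) (L : List α) :
    c * σ.length ≤ serveCost c L σ as := by
  induction σ generalizing as L with
  | nil => simp
  | cons r σ ih =>
    obtain _ | ⟨a, as⟩ := as
    · simp at h
    · have hstep : c ≤ stepCost c L r a := by unfold stepCost; omega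
      have := ih (by simpa using h) (stepList L r a)
      simp only [List.length_cons, serveCost]
      nlinarith

lemma optCost_le_serveCost (c : ℕ) (L σ : List α) {as : List (Action α)}
    (h : as.length = σ.length) :
    optCost c L σ ≤ serveCost c L σ as :=
  Nat.sInf_le ⟨as, h, rfl⟩

lemma mul_length_le_optCost (c : ℕ) (L σ : List α) : c * σ.length ≤ optCost c L σ := by
  have hne : {n | ∃ as : List (Action α), as.length = σ.length ∧ serveCost c L σ as = n}.Nonempty :=
    ⟨_, List.replicate σ.length ⟨[], 0⟩, List.length_replicate, rfl⟩
  obtain ⟨as, h, hopt⟩ := Nat.sInf_mem hne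
  exact (mul_length_le_serveCost c h L).trans_eq hopt

end Offline

section MTF2

def mtf2Bits : (α → Bool) → List α → (α → Bool)
  | bits, [] => bits
  | bits, r :: σ => mtf2Bits (Function.update bits r (!bits r)) σ

lemma mtf2Cost_append (c : ℕ) (bits : α → Bool) (L σ₁ σ₂ : List α) :
    mtf2Cost c bits L (σ₁ ++ σ₂)
      = mtf2Cost c bits L σ₁ + mtf2Cost c (mtf2Bits bits σ₁) (mtf2List bits L σ₁) σ₂ := by
  induction σ₁ generalizing bits L with
  | nil => simp [mtf2Cost, mtf2List, mtf2Bits]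
  | cons r σ ih => simp [mtf2Cost, mtf2List, mtf2Bits, ih, Nat.add_assoc]

lemma mtf2Bits_apply (bits : α → Bool) (σ : List α) (x : α) :
    mtf2Bits bits σ x = if Even (σ.count x) then bits x else !bits x := by
  induction σ generalizing bits with
  | nil => simp [mtf2Bits]
  | cons r σ ih =>
    rw [mtf2Bits, ih]
    by_cases hx : x = r
    · subst hx
      by_cases he : Even (σ.count x) <;> simp [he, Nat.even_add_one]
    · rw [List.count_cons_of_ne (Ne.symm hx), Function.update_of_ne hx]

lemma mtf2Bits_eq_self {σ : List α} (h : ∀ x ∈ σ, Even (σ.count x)) (bits : α → Bool) :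
    mtf2Bits bits σ = bits := by
  funext x
  rw [mtf2Bits_apply, if_pos]
  by_cases hx : x ∈ σ
  · exact h x hx
  · simp [List.count_eq_zero_of_not_mem hx]

lemma mtf2Cost_flatten_replicate (c : ℕ) {bits : α → Bool} {B L : List α}
    (hB : ∀ x ∈ B, Even (B.count x)) (hL : mtf2List bits L B = L) (n : ℕ) :
    mtf2Cost c bits L (List.replicate n B).flatten = n * mtf2Cost c bits L B := by
  induction n with
  | zero => simp [mtf2Cost]
  | succ n ih =>
    simp only [List.replicate_succ, List.flatten_cons]
    rw [mtf2Cost_append, mtf2Bits_eq_self hB, hL, ih]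
    ring

end MTF2

section TS

def tsList : List α → List α → List α → List α
  | _, L, [] => L
  | h, L, r :: σ => tsList (r :: h) (tsStep h L r) σ

lemma tsCost_append (c : ℕ) (h L σ₁ σ₂ : List α) :
    tsCost c h L (σ₁ ++ σ₂)
      = tsCost c h L σ₁ + tsCost c (σ₁.reverse ++ h) (tsList h L σ₁) σ₂ := by
  induction σ₁ generalizing h L with
  | nil => simp [tsCost, tsList]
  | cons r σ ih => simp [tsCost, tsList, ih, Nat.add_assoc]

lemma tsStep_append_of_mem {x : α} {h : List α} (hx : x ∈ h) (h' L : List α) :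
    tsStep (h ++ h') L x = tsStep h L x := by
  have hwhile : (h ++ h').takeWhile (fun w => decide (w ≠ x))
      = h.takeWhile (fun w => decide (w ≠ x)) := by
    rw [List.takeWhile_append, if_neg]
    intro hlen
    have hall := List.mem_takeWhile_imp (((List.takeWhile_prefix _).eq_of_length hlen).symm ▸ hx)
    simp at hall
  unfold tsStep
  rw [if_pos (List.mem_append_left _ hx), if_pos hx, hwhile]

lemma tsList_append_history {σ h : List α} (hσ : ∀ r ∈ σ, r ∈ h) (h' L : List α) :
    tsList (h ++ h') L σ = tsList h L σ := by
  induction σ generalizing h L with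
  | nil => rfl
  | cons r σ ih =>
    simp only [tsList, ← List.cons_append]
    rw [tsStep_append_of_mem (hσ r List.mem_cons_self),
      ih fun s hs => List.mem_cons_of_mem r (hσ s (List.mem_cons_of_mem r hs))]

lemma tsCost_append_history (c : ℕ) {σ h : List α} (hσ : ∀ r ∈ σ, r ∈ h) (h' L : List α) :
    tsCost c (h ++ h') L σ = tsCost c h L σ := by
  induction σ generalizing h L with
  | nil => rfl
  | cons r σ ih =>
    simp only [tsCost, ← List.cons_append]
    rw [tsStep_append_of_mem (hσ r List.mem_cons_self),
      ih fun s hs => List.mem_cons_of_mem r (hσ s (List.mem_cons_of_mem r hs))]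

lemma tsCost_reverse_append_flatten_replicate (c : ℕ) {B L : List α}
    (hL : tsList B.reverse L B = L) (n : ℕ) (h' : List α) :
    tsCost c (B.reverse ++ h') L (List.replicate n B).flatten = n * tsCost c B.reverse L B := by
  have hseen : ∀ r ∈ B, r ∈ B.reverse := fun r => List.mem_reverse.mpr
  induction n generalizing h' with
  | zero => simp [tsCost]
  | succ n ih =>
    simp only [List.replicate_succ, List.flatten_cons]
    rw [tsCost_append, tsCost_append_history c hseen, tsList_append_history hseen, hL, ih]
    ring

lemma tsCost_nil_flatten_replicate (c : ℕ) {B L : List α}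
    (hL₀ : tsList [] L B = L) (hc₀ : tsCost c [] L B = tsCost c B.reverse L B)
    (hL : tsList B.reverse L B = L) (n : ℕ) :
    tsCost c [] L (List.replicate n B).flatten = n * tsCost c B.reverse L B := by
  cases n with
  | zero => simp [tsCost]
  | succ n =>
    simp only [List.replicate_succ, List.flatten_cons]
    rw [tsCost_append, hL₀, hc₀, tsCost_reverse_append_flatten_replicate c hL]
    ring

end TS

section Witness

set_option maxRecDepth 100000

def items : List ℕ := List.range 25

def doubled (l : List ℕ) : List ℕ := l.flatMap fun i => [i, i]

def block : List ℕ :=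
  items ++ items ++ items ++ doubled items ++ items.reverse ++ doubled items.reverse

-- Target `25` leaves the requested item in place (`freeMove` caps it at the current position).
def blockActions : List (Action ℕ) :=
  List.replicate 75 ⟨[], 25⟩ ++ List.replicate 50 ⟨[], 0⟩ ++
    List.replicate 25 ⟨[], 25⟩ ++ List.replicate 50 ⟨[], 0⟩

def hardSequence (n : ℕ) : List ℕ := (List.replicate n block).flatten

lemma mem_items_of_mem_hardSequence {n r : ℕ} (hr : r ∈ hardSequence n) : r ∈ items := by
  obtain ⟨B, hB, hrB⟩ := List.mem_flatten.mp hr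
  rw [List.eq_of_mem_replicate hB] at hrB
  exact (by decide : ∀ r ∈ block, r ∈ items) r hrB

lemma length_hardSequence (n : ℕ) : (hardSequence n).length = 200 * n := by
  simp [hardSequence, List.length_flatten, block, doubled, items]
  ring

lemma even_count_block : ∀ x ∈ block, Even (block.count x) := by decide +kernel

lemma optCost_hardSequence_le (n : ℕ) : optCost 1 items (hardSequence n) ≤ 2000 * n := by
  have hlen : blockActions.length = block.length := by decide
  have hcost : serveCost 1 items block blockActions = 2000 := by decide +kernel
  have hL : serveList items block blockActions = items := by decide +kernel
  calc optCost 1 items (hardSequence n)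
      ≤ serveCost 1 items (hardSequence n) (List.replicate n blockActions).flatten :=
        optCost_le_serveCost 1 _ _ (by simp [hardSequence, List.length_flatten, hlen])
    _ = 2000 * n := by rw [hardSequence, serveCost_flatten_replicate 1 hlen hL, hcost, mul_comm]

lemma mtfoCost_hardSequence (n : ℕ) : mtfoCost 1 items (hardSequence n) = 3200 * n := by
  have hcost : mtf2Cost 1 (fun _ => true) items block = 3200 := by decide +kernel
  have hL : mtf2List (fun _ => true) items block = items := by decide +kernel
  rw [mtfoCost, hardSequence, mtf2Cost_flatten_replicate 1 even_count_block hL, hcost, mul_comm]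

lemma mtfeCost_hardSequence (n : ℕ) : mtfeCost 1 items (hardSequence n) = 3200 * n := by
  have hcost : mtf2Cost 1 (fun _ => false) items block = 3200 := by decide +kernel
  have hL : mtf2List (fun _ => false) items block = items := by decide +kernel
  rw [mtfeCost, hardSequence, mtf2Cost_flatten_replicate 1 even_count_block hL, hcost, mul_comm]

lemma tsCost_hardSequence (n : ℕ) : tsCost 1 [] items (hardSequence n) = 3200 * n := by
  have hL₀ : tsList [] items block = items := by decide +kernel
  have hc₀ : tsCost 1 [] items block = tsCost 1 block.reverse items block := by decide +kernel
  have hL : tsList block.reverse items block = items := by decide +kernel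
  have hcost : tsCost 1 block.reverse items block = 3200 := by decide +kernel
  rw [hardSequence, tsCost_nil_flatten_replicate 1 hL₀ hc₀ hL, hcost, mul_comm]

lemma mul_optCost_le_min_hardSequence (n : ℕ) :
    (1.6 : ℝ) * optCost 1 items (hardSequence n) ≤
      min (mtfoCost 1 items (hardSequence n) : ℝ)
        (min (mtfeCost 1 items (hardSequence n) : ℝ) (tsCost 1 [] items (hardSequence n))) := by
  rw [mtfoCost_hardSequence, mtfeCost_hardSequence, tsCost_hardSequence, min_self, min_self]
  have hopt : (optCost 1 items (hardSequence n) : ℝ) ≤ 2000 * n := by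
    exact_mod_cast optCost_hardSequence_le n
  push_cast
  linarith

lemma le_optCost_hardSequence (n : ℕ) : n ≤ optCost 1 items (hardSequence n) := by
  have := mul_length_le_optCost 1 items (hardSequence n)
  rw [length_hardSequence] at this
  omega

end Witness

end ListUpdate

lemma ratio_lower_bound_of_family {ρ : ℝ} (alg : ℕ → ℝ) (opt : ℕ → ℕ)
    (h_ratio : ∀ n, ρ * opt n ≤ alg n) (h_unbounded : ∀ n, n ≤ opt n) :
    (∀ ε : ℝ, 0 < ε → ∀ M : ℕ, ∃ n, M ≤ opt n ∧ (ρ - ε) * opt n ≤ alg n) ∧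
      ∀ c : ℝ, c < ρ → ∀ b : ℝ, ∃ n, ¬alg n ≤ c * opt n + b := by
  refine ⟨fun ε hε M => ⟨M, h_unbounded M, ?_⟩, fun c hc b => ?_⟩
  · nlinarith [h_ratio M, (Nat.cast_nonneg (opt M) : (0 : ℝ) ≤ opt M)]
  · obtain ⟨n, hn⟩ := exists_nat_gt (b / (ρ - c))
    refine ⟨n, fun hle => ?_⟩
    have hb : b < (ρ - c) * n := by rwa [div_lt_iff₀' (sub_pos.mpr hc)] at hn
    have hopt : (n : ℝ) ≤ opt n := by exact_mod_cast h_unbounded n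
    nlinarith [h_ratio n]

open ListUpdate

/-- For every `ε > 0` and every `M` there are an initial list and a request sequence
`σ` with `OPT(σ) ≥ M` and `min(MTFO(σ), MTFE(σ), TS(σ)) ≥ (1.6 − ε)·OPT(σ)` (full cost
model); consequently, the algorithm serving each input by the cheapest of MTFO, MTFE
and TS has competitive ratio at least `1.6`. -/
theorem best_of_three_lower_bound :
    (∀ ε : ℝ, 0 < ε → ∀ M : ℕ, ∃ (L σ : List ℕ), L.Nodup ∧ (∀ r ∈ σ, r ∈ L) ∧
      M ≤ optCost 1 L σ ∧
      (1.6 - ε) * (optCost 1 L σ : ℝ) ≤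
        (min (mtfoCost 1 L σ) (min (mtfeCost 1 L σ) (tsCost 1 [] L σ)) : ℝ)) ∧
    (∀ c : ℝ, c < 1.6 → ∀ b : ℝ, ∃ (L σ : List ℕ), L.Nodup ∧ (∀ r ∈ σ, r ∈ L) ∧
      ¬((min (mtfoCost 1 L σ) (min (mtfeCost 1 L σ) (tsCost 1 [] L σ)) : ℝ) ≤
          c * (optCost 1 L σ : ℝ) + b)) := by
  obtain ⟨h_approx, h_ratio⟩ := ratio_lower_bound_of_family _ _
    mul_optCost_le_min_hardSequence le_optCost_hardSequence
  refine ⟨fun ε hε M => ?_, fun c hc b => ?_⟩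
  · obtain ⟨n, hM, hn⟩ := h_approx ε hε M
    exact ⟨items, hardSequence n, List.nodup_range, fun _ => mem_items_of_mem_hardSequence, hM, hn⟩
  · obtain ⟨n, hn⟩ := h_ratio c hc b
    exact ⟨items, hardSequence n, List.nodup_range, fun _ => mem_items_of_mem_hardSequence, hn⟩
end
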